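/- For α ≥ β > 0 and a constant c ≥ 0 satisfying β − cα ≥ 0, for all t > 0 one has 1 + β t coth(β t) − cα t coth(α t) ≥ 2 − 2cα/β. -/

import Mathlib

open Real

lemma sinh_le_mul_cosh (x : ℝ) (hx : 0 ≤ x) : Real.sinh x ≤ x * Real.cosh x := by
  have h : MonotoneOn (fun y : ℝ => y * Real.cosh y - Real.sinh y) (Set.Ici 0) := by
    apply monotoneOn_of_deriv_nonneg (convex_Ici 0)
    · exact ((continuous_id.mul Real.continuous_cosh).sub Real.continuous_sinh).continuousOn
    · intro y _
      exact (((differentiable_id.mul Real.differentiable_cosh).sub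
        Real.differentiable_sinh) y).differentiableWithinAt
    · intro y hy
      have : deriv (fun y : ℝ => y * Real.cosh y - Real.sinh y) y = y * Real.sinh y := by
        rw [deriv_fun_sub, deriv_fun_mul] <;>
          simp [Real.deriv_cosh, Real.deriv_sinh] <;>
          fun_prop
      rw [this]
      have hy0 : 0 ≤ y := le_of_lt (by simpa using hy)
      exact mul_nonneg hy0 (Real.sinh_nonneg_iff.2 hy0)
  have := h (Set.self_mem_Ici) (Set.mem_Ici.2 hx) hx
  simp at this
  linarith

lemma one_le_mul_coth (x : ℝ) (hx : 0 < x) :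
    1 ≤ x * (Real.cosh x / Real.sinh x) := by
  have hs : 0 < Real.sinh x := Real.sinh_pos_iff.2 hx
  rw [mul_div_assoc', le_div_iff₀ hs, one_mul]
  exact sinh_le_mul_cosh x hx.le

lemma coth_anti {a b : ℝ} (ha : 0 < a) (hab : a ≤ b) :
    Real.cosh b / Real.sinh b ≤ Real.cosh a / Real.sinh a := by
  have hsa : 0 < Real.sinh a := Real.sinh_pos_iff.2 ha
  have hsb : 0 < Real.sinh b := Real.sinh_pos_iff.2 (lt_of_lt_of_le ha hab)
  rw [div_le_div_iff₀ hsb hsa]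
  have h : 0 ≤ Real.sinh (b - a) := Real.sinh_nonneg_iff.2 (by linarith)
  rw [Real.sinh_sub] at h
  nlinarith

/-- For `α ≥ β > 0` and `c ≥ 0` with `β - c·α ≥ 0`, for all `t > 0`,
`1 + βt·coth(βt) − cαt·coth(αt) ≥ 2 − 2cα/β`. -/
theorem coth_lower_bound_case_iv (α β c : ℝ) (hβ : 0 < β) (hαβ : β ≤ α)
    (hc : 0 ≤ c) (hβc : 0 ≤ β - c * α) :
    ∀ t > (0:ℝ),
      1 + β * t * (Real.cosh (β * t) / Real.sinh (β * t))
        - c * α * t * (Real.cosh (α * t) / Real.sinh (α * t))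
        ≥ 2 - 2 * c * α / β := by
  intro t ht
  have hβt : 0 < β * t := mul_pos hβ ht
  have hαt : β * t ≤ α * t := mul_le_mul_of_nonneg_right hαβ ht.le
  have h1 : 1 ≤ β * t * (Real.cosh (β * t) / Real.sinh (β * t)) :=
    one_le_mul_coth _ hβt
  have h2 : Real.cosh (α * t) / Real.sinh (α * t)
      ≤ Real.cosh (β * t) / Real.sinh (β * t) := coth_anti hβt hαt
  set Cb := Real.cosh (β * t) / Real.sinh (β * t)
  set Ca := Real.cosh (α * t) / Real.sinh (α * t)
  clear_value Cb Ca
  have hcα : 0 ≤ c * α := by nlinarith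
  have h3 : c * α * t * Ca ≤ c * α * t * Cb :=
    mul_le_mul_of_nonneg_left h2 (by positivity)
  have h4 : (β - c * α) * (t * Cb) ≥ (β - c * α) / β := by
    have htCb : 1 / β ≤ t * Cb := by
      rw [div_le_iff₀ hβ]; nlinarith [h1]
    calc (β - c * α) / β = (β - c * α) * (1 / β) := by ring
      _ ≤ (β - c * α) * (t * Cb) := mul_le_mul_of_nonneg_left htCb hβc
  have h5 : (β - c * α) / β = 1 - c * α / β := by field_simp
  have h6 : 0 ≤ c * α / β := by positivity
  have k2 : 1 + β * t * Cb - c * α * t * Cb ≥ 2 - c * α / β := by nlinarith [h4, h5]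
  have h7 : 2 * c * α / β = 2 * (c * α / β) := by ring
  linarith [h3, k2, h6, h7.le, h7.ge]
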